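/- arXiv:2111.03223 — 2 statements merged into one kernel-verified Lean document; each statement's English description precedes it below -/
import Mathlib

section
/- Let τ_1 < τ_2 < τ_3 be any three distinct quantile levels in (0.5,1) (more generally K ≥ 3 distinct levels in (0.5,1); the same holds for levels in (0,0.5)). If two Tukey lambda parameter vectors θ = (θ_1,θ_2,θ_3) and θ̃ = (θ̃_1,θ̃_2,θ̃_3), with θ_1,θ̃_1 ∈ ℝ, θ_2,θ̃_2 > 0, θ_3,θ̃_3 < 1 and θ_3,θ̃_3 ≠ 0, satisfy Q(τ_k,θ) = Q(τ_k,θ̃) for all k, then θ = θ̃. -/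
open Real

/-- The Tukey lambda quantile function
`Q(τ,θ) = θ₁ + θ₂ · (τ^θ₃ − (1−τ)^θ₃)/θ₃` for a parameter vector `θ = (θ₁, θ₂, θ₃)`. -/
noncomputable def tukeyQ (θ : ℝ × ℝ × ℝ) (τ : ℝ) : ℝ :=
  θ.1 + θ.2.1 * ((τ ^ θ.2.2 - (1 - τ) ^ θ.2.2) / θ.2.2)

/-!
If `Q(·, θ)` and `Q(·, θ̃)` agree at three levels, Rolle's theorem (applied twice to their
difference) gives two points `x₁ < x₂` of `(1/2, 1)` at which the quantile densities
`θ₂ p_{θ₃-1}` and `θ̃₂ p_{θ̃₃-1}` agree, where `p_a(x) = x^a + (1-x)^a`. For `a < c < 0` the ratio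
`p_a / p_c` is strictly increasing on `(1/2, 1)`: with `s = (1-x)/x ∈ (0, 1)` one has
`(1-x) p_a'(x) / p_a(x) = (-a) (s^a - s) / (1 + s^a)`, a product of two positive factors that both
decrease in `a < 0`. So the two densities can cross at most once unless `θ₃ = θ̃₃`; then
`θ₂ = θ̃₂`, and `θ₁ = θ̃₁`.
-/

open Set

noncomputable def symRpowSum (a x : ℝ) : ℝ := x ^ a + (1 - x) ^ a

/-- With `s = (1 - x) / x`, this is `(1 - x) p_a'(x) / p_a(x)` for `p_a = symRpowSum a`
(`symRpowSum_deriv_eq`). -/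
noncomputable def symRpowSlope (s a : ℝ) : ℝ := a * (s - s ^ a) / (1 + s ^ a)

section Calculus

variable {a x : ℝ}

lemma symRpowSum_pos (hx₀ : 0 < x) (hx₁ : x < 1) : 0 < symRpowSum a x := by
  have : 0 < 1 - x := by linarith
  unfold symRpowSum; positivity

lemma hasDerivAt_one_sub_rpow (hx : x < 1) :
    HasDerivAt (fun y : ℝ => (1 - y) ^ a) (-(a * (1 - x) ^ (a - 1))) x := by
  have := (hasDerivAt_rpow_const (p := a) (Or.inl (sub_ne_zero.2 hx.ne'))).comp x
    ((hasDerivAt_id x).const_sub 1)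
  exact this.congr_deriv (by simp)

lemma hasDerivAt_symRpowSum (hx₀ : 0 < x) (hx₁ : x < 1) :
    HasDerivAt (symRpowSum a) (a * (x ^ (a - 1) - (1 - x) ^ (a - 1))) x :=
  ((hasDerivAt_rpow_const (Or.inl hx₀.ne')).add (hasDerivAt_one_sub_rpow hx₁)).congr_deriv
    (by ring)

lemma hasDerivAt_tukeyQ (θ : ℝ × ℝ × ℝ) (hθ₃ : θ.2.2 ≠ 0) (hx₀ : 0 < x) (hx₁ : x < 1) :
    HasDerivAt (tukeyQ θ) (θ.2.1 * symRpowSum (θ.2.2 - 1) x) x := by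
  have := ((((hasDerivAt_rpow_const (p := θ.2.2) (Or.inl hx₀.ne')).sub
    (hasDerivAt_one_sub_rpow (a := θ.2.2) hx₁)).div_const θ.2.2).const_mul θ.2.1).const_add θ.1
  refine this.congr_deriv ?_
  unfold symRpowSum
  field_simp
  ring

lemma symRpowSum_deriv_eq (hx₀ : 0 < x) (hx₁ : x < 1) :
    (1 - x) * (a * (x ^ (a - 1) - (1 - x) ^ (a - 1)))
      = symRpowSlope ((1 - x) / x) a * symRpowSum a x := by
  have hy₀ : 0 < 1 - x := by linarith
  have hxa : x ^ a = x ^ (a - 1) * x := by rw [← rpow_add_one hx₀.ne']; ring_nf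
  have hya : (1 - x) ^ a = (1 - x) ^ (a - 1) * (1 - x) := by
    rw [← rpow_add_one hy₀.ne']; ring_nf
  have : 0 < x ^ (a - 1) := rpow_pos_of_pos hx₀ _
  have : 0 < (1 - x) ^ (a - 1) := rpow_pos_of_pos hy₀ _
  unfold symRpowSlope symRpowSum
  rw [div_rpow hy₀.le hx₀.le, hxa, hya]
  field_simp

end Calculus

lemma symRpowSlope_strictAntiOn {s : ℝ} (hs₀ : 0 < s) (hs₁ : s < 1) :
    StrictAntiOn (symRpowSlope s) (Iio 0) := by
  intro a ha b hb hab
  have factor_eq (c : ℝ) : symRpowSlope s c = -c * ((s ^ c - s) / (1 + s ^ c)) := by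
    unfold symRpowSlope; ring
  have hsb : 1 < s ^ b := one_lt_rpow_of_pos_of_lt_one_of_neg hs₀ hs₁ hb
  have hsab : s ^ b < s ^ a := rpow_lt_rpow_of_exponent_gt hs₀ hs₁ hab
  have hfactor : (s ^ b - s) / (1 + s ^ b) < (s ^ a - s) / (1 + s ^ a) := by
    rw [div_lt_div_iff₀ (by linarith) (by linarith)]
    nlinarith
  have hb₀ : b < 0 := hb
  rw [factor_eq, factor_eq]
  exact mul_lt_mul'' (neg_lt_neg hab) hfactor (neg_nonneg.2 hb₀.le)
    (div_pos (by linarith) (by linarith)).le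

section Ratio

variable {a c : ℝ}

lemma strictMonoOn_symRpowSum_div (hac : a < c) (hc : c < 0) :
    StrictMonoOn (fun x => symRpowSum a x / symRpowSum c x) (Ioo (1 / 2) 1) := by
  have hderiv : ∀ x ∈ Ioo (1 / 2 : ℝ) 1, HasDerivAt (fun x => symRpowSum a x / symRpowSum c x)
      ((a * (x ^ (a - 1) - (1 - x) ^ (a - 1)) * symRpowSum c x
        - symRpowSum a x * (c * (x ^ (c - 1) - (1 - x) ^ (c - 1)))) / symRpowSum c x ^ 2) x :=
    fun x hx => (hasDerivAt_symRpowSum (by linarith [hx.1]) hx.2).div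
      (hasDerivAt_symRpowSum (by linarith [hx.1]) hx.2)
      (symRpowSum_pos (by linarith [hx.1]) hx.2).ne'
  refine strictMonoOn_of_deriv_pos (convex_Ioo _ _)
    (fun x hx => (hderiv x hx).continuousAt.continuousWithinAt) fun x hx => ?_
  rw [interior_Ioo] at hx
  rw [(hderiv x hx).deriv]
  obtain ⟨hx₀, hx₁⟩ : 1 / 2 < x ∧ x < 1 := hx
  set s := (1 - x) / x
  have hs₀ : 0 < s := div_pos (by linarith) (by linarith)
  have hs₁ : s < 1 := by rw [div_lt_one (by linarith)]; linarith
  have hslope : symRpowSlope s c < symRpowSlope s a :=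
    symRpowSlope_strictAntiOn hs₀ hs₁ (hac.trans hc) hc hac
  have hpa := symRpowSum_pos (a := a) (by linarith) hx₁
  have hpc := symRpowSum_pos (a := c) (by linarith) hx₁
  have ea := symRpowSum_deriv_eq (a := a) (by linarith) hx₁
  have ec := symRpowSum_deriv_eq (a := c) (by linarith) hx₁
  refine div_pos (pos_of_mul_pos_right (a := 1 - x) ?_ (by linarith)) (by positivity)
  convert mul_pos (sub_pos.2 hslope) (mul_pos hpa hpc) using 1
  linear_combination symRpowSum c x * ea - symRpowSum a x * ec

lemma injOn_symRpowSum_div (ha : a < 0) (hc : c < 0) (hac : a ≠ c) :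
    InjOn (fun x => symRpowSum a x / symRpowSum c x) (Ioo (1 / 2) 1) := by
  rcases hac.lt_or_gt with hac | hca
  · exact (strictMonoOn_symRpowSum_div hac hc).injOn
  · intro x hx y hy hxy
    refine (strictMonoOn_symRpowSum_div hca ha).injOn hx hy ?_
    simpa only [inv_div] using congrArg Inv.inv hxy

lemma eq_of_mul_symRpowSum_eq_of_eq {α β x₁ x₂ : ℝ} (ha : a < 0) (hc : c < 0) (hα : α ≠ 0)
    (hx₁ : x₁ ∈ Ioo (1 / 2 : ℝ) 1) (hx₂ : x₂ ∈ Ioo (1 / 2 : ℝ) 1) (hne : x₁ ≠ x₂)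
    (h₁ : α * symRpowSum a x₁ = β * symRpowSum c x₁)
    (h₂ : α * symRpowSum a x₂ = β * symRpowSum c x₂) : a = c := by
  have ratio_eq {x : ℝ} (hx : x ∈ Ioo (1 / 2 : ℝ) 1)
      (h : α * symRpowSum a x = β * symRpowSum c x) :
      symRpowSum a x / symRpowSum c x = β / α := by
    rw [div_eq_div_iff (symRpowSum_pos (by linarith [hx.1]) hx.2).ne' hα]
    linear_combination h
  by_contra hac
  exact hne <| injOn_symRpowSum_div ha hc hac hx₁ hx₂ <|
    (ratio_eq hx₁ h₁).trans (ratio_eq hx₂ h₂).symm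

end Ratio

lemma exists_two_hasDerivAt_eq_zero {f f' : ℝ → ℝ} {x y z : ℝ} (hxy : x < y) (hyz : y < z)
    (hf : ∀ w ∈ Icc x z, HasDerivAt f (f' w) w) (hfxy : f x = f y) (hfyz : f y = f z) :
    ∃ u ∈ Ioo x y, ∃ v ∈ Ioo y z, f' u = 0 ∧ f' v = 0 := by
  have rolle {p q : ℝ} (hpq : p < q) (hsub : Icc p q ⊆ Icc x z) (hfpq : f p = f q) :
      ∃ u ∈ Ioo p q, f' u = 0 :=
    exists_hasDerivAt_eq_zero hpq
      (fun w hw => (hf w (hsub hw)).continuousAt.continuousWithinAt) hfpq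
      (fun w hw => hf w (hsub (Ioo_subset_Icc_self hw)))
  obtain ⟨u, hu, hu₀⟩ := rolle hxy (Icc_subset_Icc_right hyz.le) hfxy
  obtain ⟨v, hv, hv₀⟩ := rolle hyz (Icc_subset_Icc_left hxy.le) hfyz
  exact ⟨u, hu, v, hv, hu₀, hv₀⟩

theorem tukey_identification_three_levels_upper_tail_general
    (K : ℕ) (hK : 3 ≤ K) (τ : Fin K → ℝ) (hτmono : StrictMono τ)
    (hτ : ∀ k, τ k ∈ Set.Ioo (1 / 2 : ℝ) 1)
    (θ θt : ℝ × ℝ × ℝ)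
    (hθ2 : 0 < θ.2.1)
    (hθ3lt : θ.2.2 < 1) (hθt3lt : θt.2.2 < 1)
    (hθ3ne : θ.2.2 ≠ 0) (hθt3ne : θt.2.2 ≠ 0)
    (heq : ∀ k, tukeyQ θ (τ k) = tukeyQ θt (τ k)) :
    θ = θt := by
  let i₀ : Fin K := ⟨0, by omega⟩
  let i₁ : Fin K := ⟨1, by omega⟩
  let i₂ : Fin K := ⟨2, by omega⟩
  have hmem {x : ℝ} (hx : x ∈ Icc (τ i₀) (τ i₂)) : x ∈ Ioo (1 / 2 : ℝ) 1 :=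
    ⟨(hτ i₀).1.trans_le hx.1, hx.2.trans_lt (hτ i₂).2⟩
  have hderiv : ∀ x ∈ Icc (τ i₀) (τ i₂), HasDerivAt (fun x => tukeyQ θ x - tukeyQ θt x)
      (θ.2.1 * symRpowSum (θ.2.2 - 1) x - θt.2.1 * symRpowSum (θt.2.2 - 1) x) x :=
    fun x hx => (hasDerivAt_tukeyQ θ hθ3ne (by linarith [(hmem hx).1]) (hmem hx).2).sub
      (hasDerivAt_tukeyQ θt hθt3ne (by linarith [(hmem hx).1]) (hmem hx).2)
  have h₀₁ : τ i₀ < τ i₁ := hτmono (Fin.mk_lt_mk.2 zero_lt_one)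
  have h₁₂ : τ i₁ < τ i₂ := hτmono (Fin.mk_lt_mk.2 one_lt_two)
  obtain ⟨u, hu, v, hv, hu₀, hv₀⟩ := exists_two_hasDerivAt_eq_zero h₀₁ h₁₂ hderiv
    (by simp only [heq, sub_self]) (by simp only [heq, sub_self])
  have hu' := hmem (Ioo_subset_Icc_self ⟨hu.1, hu.2.trans (hv.1.trans hv.2)⟩)
  have hv' := hmem (Ioo_subset_Icc_self ⟨hu.1.trans (hu.2.trans hv.1), hv.2⟩)
  have hθ₃eq : θ.2.2 = θt.2.2 := by
    have := eq_of_mul_symRpowSum_eq_of_eq (by linarith) (by linarith) hθ2.ne' hu' hv'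
      (hu.2.trans hv.1).ne (sub_eq_zero.1 hu₀) (sub_eq_zero.1 hv₀)
    linarith
  have h₂ : θ.2.1 = θt.2.1 := by
    rw [hθ₃eq, sub_eq_zero] at hu₀
    exact mul_right_cancel₀ (symRpowSum_pos (by linarith [hu'.1]) hu'.2).ne' hu₀
  have h₁ : θ.1 = θt.1 := by
    have := heq i₀
    simp only [tukeyQ, hθ₃eq, h₂] at this
    linarith
  exact Prod.ext h₁ (Prod.ext h₂ hθ₃eq)

/-- `K ≥ 3` distinct quantile levels in `(0.5, 1)` identify the Tukey lambda
parameters: if two admissible parameter vectors give the same quantiles at all `K` levels,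
they are equal. -/
theorem tukey_identification_three_levels_upper_tail
    (K : ℕ) (hK : 3 ≤ K) (τ : Fin K → ℝ) (hτmono : StrictMono τ)
    (hτ : ∀ k, τ k ∈ Set.Ioo (1 / 2 : ℝ) 1)
    (θ θt : ℝ × ℝ × ℝ)
    (hθ2 : 0 < θ.2.1) (hθt2 : 0 < θt.2.1)
    (hθ3lt : θ.2.2 < 1) (hθt3lt : θt.2.2 < 1)
    (hθ3ne : θ.2.2 ≠ 0) (hθt3ne : θt.2.2 ≠ 0)
    (heq : ∀ k, tukeyQ θ (τ k) = tukeyQ θt (τ k)) :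
    θ = θt :=
  tukey_identification_three_levels_upper_tail_general K hK τ hτmono hτ θ θt hθ2 hθ3lt hθt3lt hθ3ne
    hθt3ne heq
end

section
/- Let θ < θ̃ < 0. Then for every constant c ∈ ℝ, the equation G(τ) = c has at most two distinct solutions τ in (0,1). -/
open Real

/-- The function `G(τ) = (τ^{θ̃−1} + (1−τ)^{θ̃−1}) / (τ^{θ−1} + (1−τ)^{θ−1})`. -/
noncomputable def Gfun (θ θt : ℝ) (τ : ℝ) : ℝ :=
  (τ ^ (θt - 1) + (1 - τ) ^ (θt - 1)) / (τ ^ (θ - 1) + (1 - τ) ^ (θ - 1))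

/-- Key one-variable inequality: for `b < a < 0` and `0 < r < 1`. -/
lemma Gkey {a b r : ℝ} (hba : b < a) (ha : a < 0) (hr0 : 0 < r) (hr1 : r < 1) :
    0 < a * (r ^ (a - 1) - 1) * (r ^ b + 1) - b * (r ^ (b - 1) - 1) * (r ^ a + 1) := by
  have hb : b < 0 := hba.trans ha
  have hX : (1 : ℝ) < r ^ (a + b - 1) :=
    Real.one_lt_rpow_iff_of_pos hr0 |>.2 (Or.inr ⟨hr1, by linarith⟩)
  have hprod : r ^ (a - 1) * r ^ b = r ^ (a + b - 1) := by
    rw [← Real.rpow_add hr0]; ring_nf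
  have hprod2 : r ^ (b - 1) * r ^ a = r ^ (a + b - 1) := by
    rw [← Real.rpow_add hr0]; ring_nf
  have h2 : r ^ a ≤ r ^ b := Real.rpow_le_rpow_of_exponent_ge hr0 hr1.le hba.le
  have h3 : r ^ (a - 1) ≤ r ^ (b - 1) :=
    Real.rpow_le_rpow_of_exponent_ge hr0 hr1.le (by linarith)
  have h4 : r ^ a ≤ r ^ (b - 1) :=
    Real.rpow_le_rpow_of_exponent_ge hr0 hr1.le (by linarith)
  have expand : a * (r ^ (a - 1) - 1) * (r ^ b + 1) - b * (r ^ (b - 1) - 1) * (r ^ a + 1)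
      = (a - b) * (r ^ (a + b - 1) - 1) + a * (r ^ (a - 1) - r ^ b)
        - b * (r ^ (b - 1) - r ^ a) := by
    linear_combination a * hprod - b * hprod2
  rw [expand]
  nlinarith [mul_pos (show (0:ℝ) < a - b by linarith)
      (show (0:ℝ) < r ^ (a + b - 1) - 1 by linarith),
    mul_nonneg (show (0:ℝ) ≤ -a by linarith)
      (show (0:ℝ) ≤ (r ^ (b - 1) - r ^ a) - (r ^ (a - 1) - r ^ b) by linarith),
    mul_nonneg (show (0:ℝ) ≤ a - b by linarith)
      (show (0:ℝ) ≤ r ^ (b - 1) - r ^ a by linarith)]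

lemma Gfun_hasDerivAt (θ θt τ : ℝ) (h0 : 0 < τ) (h1 : τ < 1) :
    HasDerivAt (Gfun θ θt)
      ((((θt - 1) * τ ^ (θt - 1 - 1) + (-1) * (θt - 1) * (1 - τ) ^ (θt - 1 - 1))
          * (τ ^ (θ - 1) + (1 - τ) ^ (θ - 1))
        - (τ ^ (θt - 1) + (1 - τ) ^ (θt - 1))
          * ((θ - 1) * τ ^ (θ - 1 - 1) + (-1) * (θ - 1) * (1 - τ) ^ (θ - 1 - 1)))
        / (τ ^ (θ - 1) + (1 - τ) ^ (θ - 1)) ^ 2) τ := by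
  have hσ : 0 < 1 - τ := by linarith
  have hs : HasDerivAt (fun x : ℝ => 1 - x) (-1) τ := (hasDerivAt_id τ).const_sub 1
  have hNa : HasDerivAt (fun x : ℝ => x ^ (θt - 1)) ((θt - 1) * τ ^ (θt - 1 - 1)) τ :=
    Real.hasDerivAt_rpow_const (Or.inl h0.ne')
  have hNb : HasDerivAt (fun x : ℝ => (1 - x) ^ (θt - 1))
      ((-1) * (θt - 1) * (1 - τ) ^ (θt - 1 - 1)) τ :=
    hs.rpow_const (Or.inl hσ.ne')
  have hDa : HasDerivAt (fun x : ℝ => x ^ (θ - 1)) ((θ - 1) * τ ^ (θ - 1 - 1)) τ :=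
    Real.hasDerivAt_rpow_const (Or.inl h0.ne')
  have hDb : HasDerivAt (fun x : ℝ => (1 - x) ^ (θ - 1))
      ((-1) * (θ - 1) * (1 - τ) ^ (θ - 1 - 1)) τ :=
    hs.rpow_const (Or.inl hσ.ne')
  have hD0 : τ ^ (θ - 1) + (1 - τ) ^ (θ - 1) ≠ 0 := by positivity
  exact (hNa.add hNb).div (hDa.add hDb) hD0

lemma Gnum_pos (θ θt τ : ℝ) (hθ : θ < θt) (hθt : θt < 0) (h0 : 0 < τ) (h2 : τ < 1 / 2) :
    0 < ((θt - 1) * τ ^ (θt - 1 - 1) + (-1) * (θt - 1) * (1 - τ) ^ (θt - 1 - 1))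
          * (τ ^ (θ - 1) + (1 - τ) ^ (θ - 1))
        - (τ ^ (θt - 1) + (1 - τ) ^ (θt - 1))
          * ((θ - 1) * τ ^ (θ - 1 - 1) + (-1) * (θ - 1) * (1 - τ) ^ (θ - 1 - 1)) := by
  set a := θt - 1 with hadef
  set b := θ - 1 with hbdef
  have hσ : 0 < 1 - τ := by linarith
  set r := τ / (1 - τ) with hrdef
  have hr0 : 0 < r := div_pos h0 hσ
  have hr1 : r < 1 := (div_lt_one hσ).2 (by linarith)
  have hτr : r * (1 - τ) = τ := div_mul_cancel₀ τ hσ.ne'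
  have e : ∀ p : ℝ, τ ^ p = r ^ p * (1 - τ) ^ p := by
    intro p
    conv_lhs => rw [← hτr]
    exact Real.mul_rpow hr0.le hσ.le
  have e5 : (1 - τ) ^ (a - 1) * (1 - τ) ^ b = (1 - τ) ^ (a + b - 1) := by
    rw [← Real.rpow_add hσ]; ring_nf
  have e6 : (1 - τ) ^ (b - 1) * (1 - τ) ^ a = (1 - τ) ^ (a + b - 1) := by
    rw [← Real.rpow_add hσ]; ring_nf
  have hSeq : (a * τ ^ (a - 1) + (-1) * a * (1 - τ) ^ (a - 1)) * (τ ^ b + (1 - τ) ^ b)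
        - (τ ^ a + (1 - τ) ^ a) * (b * τ ^ (b - 1) + (-1) * b * (1 - τ) ^ (b - 1))
      = (1 - τ) ^ (a + b - 1)
        * (a * (r ^ (a - 1) - 1) * (r ^ b + 1) - b * (r ^ (b - 1) - 1) * (r ^ a + 1)) := by
    rw [e (a - 1), e a, e (b - 1), e b]
    linear_combination a * (r ^ (a - 1) - 1) * (r ^ b + 1) * e5
      - b * (r ^ (b - 1) - 1) * (r ^ a + 1) * e6
  calc (0:ℝ) < (1 - τ) ^ (a + b - 1)
        * (a * (r ^ (a - 1) - 1) * (r ^ b + 1) - b * (r ^ (b - 1) - 1) * (r ^ a + 1)) :=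
        mul_pos (Real.rpow_pos_of_pos hσ _)
          (Gkey (by simp only [hadef, hbdef]; linarith) (by linarith) hr0 hr1)
    _ = _ := hSeq.symm

lemma Gfun_strictMonoOn (θ θt : ℝ) (hθ : θ < θt) (hθt : θt < 0) :
    StrictMonoOn (Gfun θ θt) (Set.Ioc 0 (1 / 2)) := by
  apply strictMonoOn_of_deriv_pos (convex_Ioc _ _)
  · intro x hx
    exact (Gfun_hasDerivAt θ θt x hx.1 (by linarith [hx.2])).continuousAt.continuousWithinAt
  · intro x hx
    rw [interior_Ioc] at hx
    rw [(Gfun_hasDerivAt θ θt x hx.1 (by linarith [hx.2])).deriv]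
    have hσ : 0 < 1 - x := by linarith [hx.2]
    have hD : 0 < x ^ (θ - 1) + (1 - x) ^ (θ - 1) :=
      add_pos (Real.rpow_pos_of_pos hx.1 _) (Real.rpow_pos_of_pos hσ _)
    exact div_pos (Gnum_pos θ θt x hθ hθt hx.1 hx.2) (pow_pos hD 2)

lemma Gfun_symm (θ θt τ : ℝ) : Gfun θ θt (1 - τ) = Gfun θ θt τ := by
  unfold Gfun
  rw [show (1:ℝ) - (1 - τ) = τ from by ring, add_comm ((1 - τ) ^ (θt - 1)),
    add_comm ((1 - τ) ^ (θ - 1))]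

/-- for `θ < θ̃ < 0` and any constant `c`, the equation `G(τ) = c` has at most
two distinct solutions in `(0,1)`: among any three solutions, two must coincide. -/
theorem Gfun_eq_atMostTwoSolutions (θ θt c : ℝ) (hθ : θ < θt) (hθt : θt < 0) :
    ∀ x ∈ Set.Ioo (0 : ℝ) 1, ∀ y ∈ Set.Ioo (0 : ℝ) 1, ∀ z ∈ Set.Ioo (0 : ℝ) 1,
      Gfun θ θt x = c → Gfun θ θt y = c → Gfun θ θt z = c →
        x = y ∨ x = z ∨ y = z := by
  intro x hx y hy z hz hgx hgy hgz
  have inj := (Gfun_strictMonoOn θ θt hθ hθt).injOn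
  have hm : ∀ t ∈ Set.Ioo (0:ℝ) 1, min t (1 - t) ∈ Set.Ioc (0:ℝ) (1/2) ∧
      Gfun θ θt (min t (1 - t)) = Gfun θ θt t ∧
      (t = min t (1 - t) ∨ t = 1 - min t (1 - t)) := by
    intro t ht
    rcases le_total t (1 - t) with h | h
    · rw [min_eq_left h]
      exact ⟨⟨ht.1, by linarith⟩, rfl, Or.inl rfl⟩
    · rw [min_eq_right h]
      exact ⟨⟨by linarith [ht.2], by linarith⟩, Gfun_symm θ θt t, Or.inr (by ring)⟩
  obtain ⟨hx1, hx2, hx3⟩ := hm x hx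
  obtain ⟨hy1, hy2, hy3⟩ := hm y hy
  obtain ⟨hz1, hz2, hz3⟩ := hm z hz
  have exy : min x (1 - x) = min y (1 - y) := inj hx1 hy1 (by rw [hx2, hy2, hgx, hgy])
  have exz : min x (1 - x) = min z (1 - z) := inj hx1 hz1 (by rw [hx2, hz2, hgx, hgz])
  rw [← exy] at hy3
  rw [← exz] at hz3
  rcases hx3 with h1 | h1 <;> rcases hy3 with h2 | h2 <;> rcases hz3 with h3 | h3 <;>
    rw [h1, h2, h3] <;> simp
end
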